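/- (Stability of uniform exponential contraction.) Let R_j : B_j → B_{j+1} be linear operators such that ‖R_j^n‖ ≤ C₀·δ₀^n for all j and n, for some constants C₀, δ₀ > 0. Then for every δ₁ > δ₀ there exist constants ε₀ > 0 and C₁ > 0 with the following property: for any family of bounded linear operators S_j : B_j → B_{j+1} with sup_j ‖R_j − S_j‖ < ε₀, one has ‖S_j^n‖ ≤ C₁·δ₁^n for all j and n. -/

import Mathlib

/-!
Fix `N` with `C₀ δ₀^N < δ₁^N / 2`. For `‖R_i‖, ‖S_i‖ ≤ K` the `N`-th iterates satisfy
`‖R_j^N - S_j^N‖ ≤ N K^(N-1) sup_i ‖R_i - S_i‖`, uniformly in `j`, so a small enough perturbation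
keeps every block `S_j^N` of norm at most `δ₁^N`. Submultiplicativity of iterates then gives
`‖S_j^n‖ ≤ C₁ δ₁^n`, where `C₁` only has to absorb the at most `N - 1` leftover factors.
-/

universe u

/-- Iterated compositions `L_j^n = L_{j+n-1} ∘ ⋯ ∘ L_{j+1} ∘ L_j` of a sequence of
continuous linear operators between a sequence of Banach spaces. -/
noncomputable def iterOp {B : ℕ → Type u} [∀ j, NormedAddCommGroup (B j)]
    [∀ j, NormedSpace ℝ (B j)] (L : ∀ j, B j →L[ℝ] B (j+1)) (j : ℕ) :
    (n : ℕ) → (B j →L[ℝ] B (j+n))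
  | 0 => ContinuousLinearMap.id ℝ (B j)
  | n+1 => (L (j+n)).comp (iterOp L j n)

open Filter Topology

namespace iterOp

variable {B : ℕ → Type u} [∀ j, NormedAddCommGroup (B j)] [∀ j, NormedSpace ℝ (B j)]

theorem one (T : ∀ j, B j →L[ℝ] B (j+1)) (j : ℕ) : iterOp T j 1 = T j :=
  ContinuousLinearMap.comp_id _

-- `B (j + (k + m))` and `B (j + k + m)` are not definitionally equal, hence `HEq`.
theorem add_heq (T : ∀ j, B j →L[ℝ] B (j+1)) (j k : ℕ) :
    ∀ m, HEq (iterOp T j (k + m)) ((iterOp T (j + k) m).comp (iterOp T j k))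
  | 0 => heq_of_eq (ContinuousLinearMap.id_comp _).symm
  | m + 1 => by
    have hcomp : ∀ (a b : ℕ), a = b → ∀ (X : B j →L[ℝ] B a) (Y : B j →L[ℝ] B b),
        HEq X Y → HEq ((T a).comp X) ((T b).comp Y) := by
      rintro a b rfl X Y hXY
      rw [eq_of_heq hXY]
    rw [iterOp, ContinuousLinearMap.comp_assoc]
    exact hcomp _ _ (Nat.add_assoc j k m).symm _ _ (add_heq T j k m)

theorem norm_add_le (T : ∀ j, B j →L[ℝ] B (j+1)) (j k m : ℕ) :
    ‖iterOp T j (k + m)‖ ≤ ‖iterOp T (j + k) m‖ * ‖iterOp T j k‖ := by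
  have hnorm : ∀ (a b : ℕ), a = b → ∀ (X : B j →L[ℝ] B a) (Y : B j →L[ℝ] B b),
      HEq X Y → ‖X‖ = ‖Y‖ := by
    rintro a b rfl X Y hXY
    rw [eq_of_heq hXY]
  rw [hnorm _ _ (Nat.add_assoc j k m).symm _ _ (add_heq T j k m)]
  exact ContinuousLinearMap.opNorm_comp_le _ _

variable {T : ∀ j, B j →L[ℝ] B (j+1)}

theorem norm_le_pow {K : ℝ} (hT : ∀ i, ‖T i‖ ≤ K) (j : ℕ) : ∀ n, ‖iterOp T j n‖ ≤ K ^ n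
  | 0 => ContinuousLinearMap.norm_id_le.trans_eq (pow_zero K).symm
  | n + 1 => by
    calc ‖iterOp T j (n + 1)‖ ≤ ‖T (j + n)‖ * ‖iterOp T j n‖ :=
          ContinuousLinearMap.opNorm_comp_le _ _
      _ ≤ K * K ^ n := by
          gcongr
          · exact (norm_nonneg _).trans (hT 0)
          · exact hT _
          · exact norm_le_pow hT j n
      _ = K ^ (n + 1) := (pow_succ' K n).symm

theorem succ_sub_succ (R : ∀ j, B j →L[ℝ] B (j+1)) (j n : ℕ) :
    iterOp R j (n + 1) - iterOp T j (n + 1)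
      = (R (j + n) - T (j + n)).comp (iterOp R j n)
        + (T (j + n)).comp (iterOp R j n - iterOp T j n) := by
  rw [iterOp, iterOp, ContinuousLinearMap.sub_comp, ContinuousLinearMap.comp_sub]
  abel

-- The operator version of `|xⁿ - yⁿ| ≤ n K^(n-1) |x - y|` for `|x|, |y| ≤ K`.
theorem norm_sub_le {R : ∀ j, B j →L[ℝ] B (j+1)} {K ε : ℝ} (hR : ∀ i, ‖R i‖ ≤ K)
    (hT : ∀ i, ‖T i‖ ≤ K) (hRT : ∀ i, ‖R i - T i‖ ≤ ε) (j : ℕ) :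
    ∀ n, ‖iterOp R j n - iterOp T j n‖ ≤ n * K ^ (n - 1) * ε
  | 0 => by simp [iterOp]
  | n + 1 => by
    have hK : 0 ≤ K := (norm_nonneg _).trans (hT 0)
    calc ‖iterOp R j (n + 1) - iterOp T j (n + 1)‖
        ≤ ‖R (j + n) - T (j + n)‖ * ‖iterOp R j n‖
          + ‖T (j + n)‖ * ‖iterOp R j n - iterOp T j n‖ := by
          rw [succ_sub_succ]
          exact (_root_.norm_add_le _ _).trans (add_le_add
            (ContinuousLinearMap.opNorm_comp_le _ _) (ContinuousLinearMap.opNorm_comp_le _ _))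
      _ ≤ ε * K ^ n + K * (n * K ^ (n - 1) * ε) := by
          gcongr
          · exact (norm_nonneg _).trans (hRT 0)
          · exact hRT _
          · exact norm_le_pow hR j n
          · exact hT _
          · exact norm_sub_le hR hT hRT j n
      _ = (n + 1 : ℕ) * K ^ (n + 1 - 1) * ε := by
          rcases n with _ | n
          · simp
          · simp only [Nat.add_sub_cancel, pow_succ]; push_cast; ring

theorem norm_le_of_block {N : ℕ} (hN : 0 < N) {C δ : ℝ}
    (hblock : ∀ j, ‖iterOp T j N‖ ≤ δ ^ N)
    (hshort : ∀ j, ∀ n < N, ‖iterOp T j n‖ ≤ C * δ ^ n) (j n : ℕ) :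
    ‖iterOp T j n‖ ≤ C * δ ^ n := by
  induction n using Nat.strong_induction_on generalizing j with
  | _ n ih =>
    rcases lt_or_ge n N with hn | hn
    · exact hshort j n hn
    obtain ⟨m, rfl⟩ : ∃ m, n = N + m := ⟨n - N, by omega⟩
    have hm := ih m (by omega) (j + N)
    calc ‖iterOp T j (N + m)‖ ≤ ‖iterOp T (j + N) m‖ * ‖iterOp T j N‖ := norm_add_le T j N m
      _ ≤ (C * δ ^ m) * δ ^ N :=
          mul_le_mul hm (hblock j) (norm_nonneg _) ((norm_nonneg _).trans hm)
      _ = C * δ ^ (N + m) := by rw [pow_add]; ring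

end iterOp

theorem eventually_mul_pow_lt_mul_pow {a b : ℝ} (ha : 0 ≤ a) (hab : a < b) (c : ℝ) {d : ℝ}
    (hd : 0 < d) : ∀ᶠ n : ℕ in atTop, c * a ^ n < d * b ^ n := by
  have hb : 0 < b := ha.trans_lt hab
  have hlim : Tendsto (fun n : ℕ ↦ c * (a / b) ^ n) atTop (𝓝 0) := by
    simpa using (tendsto_pow_atTop_nhds_zero_of_lt_one (div_nonneg ha hb.le)
      ((div_lt_one hb).2 hab)).const_mul c
  filter_upwards [hlim.eventually (gt_mem_nhds hd)] with n hn
  rwa [div_pow, ← mul_div_assoc, div_lt_iff₀ (pow_pos hb n)] at hn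

theorem pow_le_mul_pow_of_le {K δ : ℝ} (hK : 0 ≤ K) (hδ : 0 < δ) {n N : ℕ} (hn : n ≤ N) :
    K ^ n ≤ (K / δ + 1) ^ N * δ ^ n := by
  have hKδ : 0 ≤ K / δ := div_nonneg hK hδ.le
  calc K ^ n = (K / δ) ^ n * δ ^ n := by rw [div_pow, div_mul_cancel₀ _ (pow_pos hδ n).ne']
    _ ≤ (K / δ + 1) ^ n * δ ^ n := by gcongr; linarith
    _ ≤ (K / δ + 1) ^ N * δ ^ n := by gcongr; linarith

theorem stability_of_exponential_contraction_general
    (B : ℕ → Type u) [∀ j, NormedAddCommGroup (B j)] [∀ j, NormedSpace ℝ (B j)]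
    (R : ∀ j, B j →L[ℝ] B (j+1)) (C₀ δ₀ : ℝ) (hδ₀ : 0 < δ₀)
    (hR : ∀ j n, ‖iterOp R j n‖ ≤ C₀ * δ₀ ^ n) :
    ∀ δ₁ : ℝ, δ₀ < δ₁ → ∃ ε₀ C₁ : ℝ, 0 < ε₀ ∧ 0 < C₁ ∧
      ∀ T : ∀ j, B j →L[ℝ] B (j+1),
        (∀ j, ‖R j - T j‖ < ε₀) → ∀ j n, ‖iterOp T j n‖ ≤ C₁ * δ₁ ^ n := by
  intro δ₁ hδ₁
  have hδ₁pos : 0 < δ₁ := hδ₀.trans hδ₁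
  have hR₁ (i : ℕ) : ‖R i‖ ≤ C₀ * δ₀ := by simpa [iterOp.one] using hR i 1
  set K := C₀ * δ₀ + 1
  have hK : 0 < K := by linarith [(norm_nonneg _).trans (hR₁ 0)]
  obtain ⟨N, hN, hRN⟩ := ((eventually_gt_atTop 0).and
    (eventually_mul_pow_lt_mul_pow hδ₀.le hδ₁ C₀ (half_pos one_pos))).exists
  obtain ⟨ε, hε, hεN⟩ := exists_pos_mul_lt (half_pos (pow_pos hδ₁pos N)) (N * K ^ (N - 1))
  refine ⟨min 1 ε, (K / δ₁ + 1) ^ N, lt_min one_pos hε, by positivity, fun T hT ↦ ?_⟩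
  have hTK (i : ℕ) : ‖T i‖ ≤ K := by
    linarith [norm_le_norm_add_norm_sub (R i) (T i), hR₁ i, (hT i).trans_le (min_le_left 1 ε)]
  have hblock (j : ℕ) : ‖iterOp T j N‖ ≤ δ₁ ^ N := by
    have hdiff := iterOp.norm_sub_le (fun i ↦ by linarith [hR₁ i]) hTK (fun i ↦ (hT i).le) j N
    have hdiffN : (N : ℝ) * K ^ (N - 1) * min 1 ε ≤ N * K ^ (N - 1) * ε := by
      gcongr
      exact min_le_right 1 ε
    linarith [norm_le_norm_add_norm_sub (iterOp R j N) (iterOp T j N), hR j N]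
  exact iterOp.norm_le_of_block hN hblock fun j n hn ↦
    (iterOp.norm_le_pow hTK j n).trans (pow_le_mul_pow_of_le hK.le hδ₁pos hn.le)

/-- **Stability of uniform exponential contraction.**  If the iterates of `R_j` satisfy
`‖R_j^n‖ ≤ C₀·δ₀^n`, then for every `δ₁ > δ₀` there are `ε₀, C₁ > 0` such that any family
`S_j` with `sup_j ‖R_j − S_j‖ < ε₀` satisfies `‖S_j^n‖ ≤ C₁·δ₁^n` for all `j, n`. -/
theorem stability_of_exponential_contraction
    (B : ℕ → Type u) [∀ j, NormedAddCommGroup (B j)] [∀ j, NormedSpace ℝ (B j)]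
    (R : ∀ j, B j →L[ℝ] B (j+1)) (C₀ δ₀ : ℝ) (hC₀ : 0 < C₀) (hδ₀ : 0 < δ₀)
    (hR : ∀ j n, ‖iterOp R j n‖ ≤ C₀ * δ₀ ^ n) :
    ∀ δ₁ : ℝ, δ₀ < δ₁ → ∃ ε₀ C₁ : ℝ, 0 < ε₀ ∧ 0 < C₁ ∧
      ∀ T : ∀ j, B j →L[ℝ] B (j+1),
        (∀ j, ‖R j - T j‖ < ε₀) → ∀ j n, ‖iterOp T j n‖ ≤ C₁ * δ₁ ^ n :=
  stability_of_exponential_contraction_general B R C₀ δ₀ hδ₀ hR
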